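/- arXiv:1202.1223 — 5 statements merged into one kernel-verified Lean document; each statement's English description precedes it below -/
import Mathlib

section
/- For a rooted phylogenetic tree T with n leaves and root r, the total cophenetic index Φ(T) = Σ_{1≤i<j≤n} δ_T(LCA_T(i,j)) equals the sum over all internal nodes v other than the root of binom(κ_T(v), 2), where κ_T(v) is the number of leaves descended from v. -/
/-- Rooted trees with natural-number-labeled leaves. -/
inductive PTree where
  | leaf : ℕ → PTree
  | node : List PTree → PTree

namespace PTree

/-- The list of leaf labels of a tree, in left-to-right order. -/
def leaves : PTree → List ℕ
  | .leaf i => [i]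
  | .node ts => ts.attach.flatMap (fun t => leaves t.1)
decreasing_by have := List.sizeOf_lt_of_mem t.2; simp_wf; omega

/-- The depth (number of arcs from the root) of the leaf labeled `i`. -/
def leafDepth : PTree → ℕ → ℕ
  | .leaf _, _ => 0
  | .node ts, i =>
      (ts.attach.map (fun t => if i ∈ leaves t.1 then 1 + leafDepth t.1 i else 0)).sum
decreasing_by have := List.sizeOf_lt_of_mem t.2; simp_wf; omega

/-- The cophenetic value of `i` and `j`: the depth of their lowest common ancestor. -/
def cophen : PTree → ℕ → ℕ → ℕ
  | .leaf _, _, _ => 0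
  | .node ts, i, j =>
      (ts.attach.map (fun t =>
        if i ∈ leaves t.1 ∧ j ∈ leaves t.1 then 1 + cophen t.1 i j else 0)).sum
decreasing_by have := List.sizeOf_lt_of_mem t.2; simp_wf; omega

/-- The nodal distance between the leaves labeled `i` and `j`:
the number of edges on the undirected path joining them. -/
def ndist : PTree → ℕ → ℕ → ℕ
  | .leaf _, _, _ => 0
  | .node ts, i, j =>
      (ts.attach.map (fun t =>
        if i ∈ leaves t.1 ∧ j ∈ leaves t.1 then ndist t.1 i j
        else if i ∈ leaves t.1 then 1 + leafDepth t.1 i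
        else if j ∈ leaves t.1 then 1 + leafDepth t.1 j
        else 0)).sum
decreasing_by have := List.sizeOf_lt_of_mem t.2; simp_wf; omega

/-- The list of the numbers of descendant leaves of each internal node,
with the root (if internal) first. -/
def allInternalSizes : PTree → List ℕ
  | .leaf _ => []
  | .node ts => (PTree.node ts).leaves.length :: ts.attach.flatMap (fun t => allInternalSizes t.1)
decreasing_by have := List.sizeOf_lt_of_mem t.2; simp_wf; omega

/-- The total cophenetic index: sum of cophenetic values over pairs of distinct leaves. -/
def Phi (T : PTree) : ℕ :=
  ∑ i ∈ T.leaves.toFinset, ∑ j ∈ T.leaves.toFinset, if i < j then cophen T i j else 0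

/-- The Sackin index: the sum of the depths of the leaves. -/
def Sackin (T : PTree) : ℕ := ∑ i ∈ T.leaves.toFinset, leafDepth T i

/-- The total area: the sum of the nodal distances between pairs of distinct leaves. -/
def Darea (T : PTree) : ℕ :=
  ∑ i ∈ T.leaves.toFinset, ∑ j ∈ T.leaves.toFinset, if i < j then ndist T i j else 0

/-- A tree is binary when every internal node has exactly two children. -/
def IsBinary : PTree → Prop
  | .leaf _ => True
  | .node ts => ts.length = 2 ∧ ∀ t ∈ ts.attach, IsBinary t.1
decreasing_by have := List.sizeOf_lt_of_mem t.2; simp_wf; omega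

/-- A tree is proper when every internal node has at least two children. -/
def Proper : PTree → Prop
  | .leaf _ => True
  | .node ts => 2 ≤ ts.length ∧ ∀ t ∈ ts.attach, Proper t.1
decreasing_by have := List.sizeOf_lt_of_mem t.2; simp_wf; omega

/-- `T` is a phylogenetic tree with `n` leaves: a proper rooted tree whose leaves are
bijectively labeled by `{1, …, n}`. -/
def IsPhylo (n : ℕ) (T : PTree) : Prop :=
  Proper T ∧ T.leaves.Nodup ∧ T.leaves.toFinset = Finset.Icc 1 n

/-- A rooted caterpillar: a binary tree all of whose internal nodes have a leaf child. -/
def IsCaterpillar : PTree → Prop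
  | .leaf _ => True
  | .node ts => ts.length = 2 ∧ (∃ t ∈ ts, ∃ i, t = PTree.leaf i) ∧
      ∀ t ∈ ts.attach, IsCaterpillar t.1
decreasing_by have := List.sizeOf_lt_of_mem t.2; simp_wf; omega

/-- A binary tree is maximally balanced when every internal node is balanced, i.e. the
numbers of descendant leaves of its two children differ by at most one. -/
def MaxBalanced : PTree → Prop
  | .leaf _ => True
  | .node [a, b] =>
      |(a.leaves.length : ℤ) - (b.leaves.length : ℤ)| ≤ 1 ∧ MaxBalanced a ∧ MaxBalanced b
  | .node _ => False

/-- Canonical representative of an isomorphism class of binary trees: at every internal node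
the subtree containing the smallest leaf label comes first. -/
def Canonical : PTree → Prop
  | .leaf _ => True
  | .node [a, b] => a.leaves.minimum < b.leaves.minimum ∧ Canonical a ∧ Canonical b
  | .node _ => False

/-- The rooted caterpillar with `n` leaves labeled `1, …, n` (for `n ≥ 1`). -/
def caterpillar : ℕ → PTree
  | 0 => .leaf 1
  | 1 => .leaf 1
  | n + 2 => .node [caterpillar (n + 1), .leaf (n + 2)]

/-- `Replace T t₀ t₀' T'` holds when `T'` is obtained from `T` by replacing the subtree `t₀`
of `T` rooted at some node by the tree `t₀'`. -/
inductive Replace : PTree → PTree → PTree → PTree → Prop where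
  | here (t₀ t₀' : PTree) : Replace t₀ t₀ t₀' t₀'
  | child (l r : List PTree) (a b t₀ t₀' : PTree) :
      Replace a t₀ t₀' b → Replace (.node (l ++ a :: r)) t₀ t₀' (.node (l ++ b :: r))

/-- The probability of a binary phylogenetic tree with `n` leaves under the Yule model. -/
noncomputable def yuleP (n : ℕ) (T : PTree) : ℝ :=
  (2 ^ (n - 1) / (n.factorial : ℝ)) *
    ((allInternalSizes T).map (fun k => ((k : ℝ) - 1)⁻¹)).prod

end PTree


/-!
Group the pairs of leaves of `node ts` by the child `t` containing both of them. The lowest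
common ancestor of such a pair lies in `t`, one arc below the root, so summing cophenetic
values gives `Φ(node ts) = ∑ₜ (C(κ(t), 2) + Φ(t))`, and pairs in different children contribute
nothing. Unfolding this recursion, every non-root internal node `v` contributes `C(κ(v), 2)`:
the cophenetic value of `i, j` counts the non-root internal nodes above both `i` and `j`.
-/

namespace List

theorem sum_flatMap {α M : Type*} [AddCommMonoid M] (l : List α) (f : α → List M) :
    (l.flatMap f).sum = (l.map fun a => (f a).sum).sum := by
  induction l with
  | nil => rfl
  | cons a l ih => simp [ih]

end List

namespace Finset

theorem sum_list_sum_map_comm {ι κ M : Type*} [AddCommMonoid M] (s : Finset ι) (l : List κ)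
    (f : ι → κ → M) : ∑ i ∈ s, (l.map (f i)).sum = (l.map fun b => ∑ i ∈ s, f i b).sum := by
  induction l with
  | nil => simp
  | cons b l ih => simp [Finset.sum_add_distrib, ih]

theorem sum_sum_ite_mem_and_mem {ι M : Type*} [AddCommMonoid M] [DecidableEq ι]
    {s t : Finset ι} (hst : s ⊆ t) (f : ι → ι → M) :
    ∑ i ∈ t, ∑ j ∈ t, (if i ∈ s ∧ j ∈ s then f i j else 0) = ∑ i ∈ s, ∑ j ∈ s, f i j := by
  simp only [ite_and, Finset.sum_ite_irrel, Finset.sum_const_zero, Finset.sum_ite_mem,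
    Finset.inter_eq_right.2 hst]

theorem sum_sum_boole_lt_eq_choose_two {α : Type*} [LinearOrder α] (s : Finset α) :
    ∑ i ∈ s, ∑ j ∈ s, (if i < j then 1 else 0) = s.card.choose 2 := by
  induction s using Finset.induction_on_max with
  | empty => simp
  | insert a s hmax ih =>
    have has : a ∉ s := fun h => lt_irrefl a (hmax a h)
    rw [Finset.sum_insert has, Finset.card_insert_of_notMem has, Nat.choose_succ_succ',
      Nat.choose_one_right, ← ih]
    simp [Finset.sum_insert has, Finset.sum_add_distrib, Finset.filter_true_of_mem hmax,
      Finset.filter_false_of_mem fun x hx => (hmax x hx).not_gt]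

end Finset

namespace PTree

theorem leaves_node (ts : List PTree) :
    (node ts).leaves = ts.attach.flatMap fun t => t.1.leaves := by
  rw [leaves]

theorem leaves_subset_leaves_node {ts : List PTree} {t : PTree} (ht : t ∈ ts) :
    t.leaves ⊆ (node ts).leaves := fun _ hi =>
  (leaves_node ts).symm ▸ List.mem_flatMap.2 ⟨⟨t, ht⟩, List.mem_attach _ _, hi⟩

theorem nodup_leaves_of_mem {ts : List PTree} {t : PTree} (h : (node ts).leaves.Nodup)
    (ht : t ∈ ts) : t.leaves.Nodup := by
  rw [leaves_node] at h
  exact (List.nodup_flatMap.1 h).1 ⟨t, ht⟩ (List.mem_attach _ _)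

theorem Phi_leaf (i : ℕ) : Phi (leaf i) = 0 := by
  simp [Phi, cophen]

theorem Phi_node {ts : List PTree} (h : (node ts).leaves.Nodup) :
    Phi (node ts) = (ts.attach.map fun t => t.1.leaves.length.choose 2 + Phi t.1).sum := by
  have hpair : ∀ i j, (if i < j then cophen (node ts) i j else 0) =
      (ts.attach.map fun t => if i ∈ t.1.leaves.toFinset ∧ j ∈ t.1.leaves.toFinset then
        (if i < j then 1 else 0) + (if i < j then cophen t.1 i j else 0) else 0).sum := by
    intro i j
    rw [cophen]
    split_ifs <;> simp [*]
  simp only [Phi, hpair, Finset.sum_list_sum_map_comm]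
  refine congrArg List.sum (List.map_congr_left fun t _ => ?_)
  have hsub : t.1.leaves.toFinset ⊆ (node ts).leaves.toFinset := fun _ hi =>
    List.mem_toFinset.2 (leaves_subset_leaves_node t.2 (List.mem_toFinset.1 hi))
  rw [Finset.sum_sum_ite_mem_and_mem hsub,
    ← List.toFinset_card_of_nodup (nodup_leaves_of_mem h t.2),
    ← Finset.sum_sum_boole_lt_eq_choose_two]
  simp only [Finset.sum_add_distrib]

theorem sum_choose_two_allInternalSizes : ∀ T : PTree, T.leaves.Nodup →
    ((allInternalSizes T).map fun k => k.choose 2).sum = T.leaves.length.choose 2 + Phi T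
  | .leaf i, _ => by simp [allInternalSizes, leaves, Phi_leaf]
  | .node ts, h => by
    rw [allInternalSizes, List.map_cons, List.sum_cons, List.map_flatMap, List.sum_flatMap,
      Phi_node h]
    congr 1
    exact congrArg List.sum (List.map_congr_left fun t _ =>
      sum_choose_two_allInternalSizes t.1 (nodup_leaves_of_mem h t.2))
decreasing_by have := List.sizeOf_lt_of_mem t.2; simp_wf; omega

end PTree

theorem total_cophenetic_eq_cluster_sum (T : PTree) (h : T.leaves.Nodup) :
    PTree.Phi T =
      (((PTree.allInternalSizes T).tail).map (fun k => Nat.choose k 2)).sum := by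
  cases T with
  | leaf i => simp [PTree.Phi_leaf, PTree.allInternalSizes]
  | node ts =>
    have hsum := PTree.sum_choose_two_allInternalSizes _ h
    rw [PTree.allInternalSizes, List.map_cons, List.sum_cons] at hsum
    rw [PTree.allInternalSizes, List.tail_cons]
    exact (Nat.add_left_cancel hsum).symm
end

section
/- For every rooted phylogenetic tree T with n leaves, (n−1)·S(T) = 2·Φ(T) + D(T), where S(T) = Σ_i δ_T(i) is the Sackin index, Φ(T) = Σ_{i<j} δ_T(LCA_T(i,j)) is the total cophenetic index, and D(T) = Σ_{i<j} d_T(i,j) is the total area (sum of nodal distances between pairs of leaves). -/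
/-!
Per child `t` of a node, the three recursions agree on the identity
`d(i,j) + 2·δ(LCA(i,j)) = δ(i) + δ(j)`: when both leaves lie in `t` the extra arc into `t`
is counted twice on both sides, when only one does it appears once on both sides. Summing
this identity over the pairs `i < j` counts every depth `δ(i)` once for each of the other
`n − 1` leaves.
-/

theorem Finset.sum_sum_ite_lt_add {α M : Type*} [LinearOrder α] [AddCommMonoid M]
    (s : Finset α) (f : α → M) :
    ∑ i ∈ s, ∑ j ∈ s, (if i < j then f i + f j else 0) = (s.card - 1) • ∑ i ∈ s, f i := by
  have hne : ∀ i j, (if i < j then f i else 0) + (if j < i then f i else 0) =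
      if j ≠ i then f i else 0 := fun i j => by
    rcases lt_trichotomy i j with h | rfl | h
    · simp [h, h.ne', h.not_gt]
    · simp
    · simp [h, h.ne, h.not_gt]
  calc ∑ i ∈ s, ∑ j ∈ s, (if i < j then f i + f j else 0)
      = ∑ i ∈ s, ∑ j ∈ s, ((if i < j then f i else 0) + if j < i then f i else 0) := by
        simp only [ite_add_zero, Finset.sum_add_distrib]
        rw [Finset.sum_comm (f := fun i j => if i < j then f j else 0)]
    _ = ∑ i ∈ s, (s.erase i).card • f i := by
        refine Finset.sum_congr rfl fun i _ => ?_
        rw [Finset.sum_congr rfl fun j _ => hne i j, ← Finset.sum_filter, Finset.filter_ne',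
          Finset.sum_const]
    _ = (s.card - 1) • ∑ i ∈ s, f i := by
        rw [Finset.smul_sum]
        exact Finset.sum_congr rfl fun i hi => by rw [Finset.card_erase_of_mem hi]

namespace PTree

theorem ndist_add_two_mul_cophen :
    ∀ (T : PTree) (i j : ℕ), ndist T i j + 2 * cophen T i j = leafDepth T i + leafDepth T j
  | .leaf _, _, _ => by simp [ndist, cophen, leafDepth]
  | .node ts, i, j => by
      rw [ndist, cophen, leafDepth, leafDepth, ← List.sum_map_mul_left, ← List.sum_map_add,
        ← List.sum_map_add]
      refine congrArg List.sum (List.map_congr_left fun t _ => ?_)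
      have := ndist_add_two_mul_cophen t.1 i j
      by_cases hi : i ∈ t.1.leaves <;> by_cases hj : j ∈ t.1.leaves <;>
        simp only [hi, hj, and_self, and_true, and_false, if_true, if_false] <;> omega
decreasing_by have := List.sizeOf_lt_of_mem t.2; simp_wf; omega

end PTree

theorem sackin_phi_darea_relation (T : PTree) (h : T.leaves.Nodup) :
    (T.leaves.length - 1) * PTree.Sackin T = 2 * PTree.Phi T + PTree.Darea T := by
  rw [← List.toFinset_card_of_nodup h, PTree.Sackin, ← smul_eq_mul,
    ← Finset.sum_sum_ite_lt_add, PTree.Phi, PTree.Darea, Finset.mul_sum,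
    ← Finset.sum_add_distrib]
  refine Finset.sum_congr rfl fun i _ => ?_
  rw [Finset.mul_sum, ← Finset.sum_add_distrib]
  refine Finset.sum_congr rfl fun j _ => ?_
  have := PTree.ndist_add_two_mul_cophen T i j
  split_ifs <;> omega
end

section
/- Let T_0 be the binary tree whose root z has children a and b, where a has subtrees T_1 (with x_1 leaves) and T_2 (with x_2 leaves) and b has subtrees T_3 (with x_3 leaves) and T_4 (with x_4 leaves), and let T_0' be obtained by interchanging T_2 and T_4. Then Φ(T_0') − Φ(T_0) = (x_1 − x_3)(x_4 − x_2). In particular, if x_1 > x_3 and x_2 > x_4 then Φ(T_0') < Φ(T_0). -/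
/-
Splitting the leaves of `node [a, b]` between the two children gives
`Φ(node [a, b]) = Φ(a) + Φ(b) + C(|a|, 2) + C(|b|, 2)`: a pair of leaves inside one child has
its cophenetic value in that child raised by one. Applying this at `z`, `a` and `b`, the only
terms that see the interchange are the clusters `C(x₁ + x₂, 2) + C(x₃ + x₄, 2)`, which become
`C(x₁ + x₄, 2) + C(x₃ + x₂, 2)`, and `C(m + n, 2) = C(m, 2) + C(n, 2) + m n` turns their
difference into `x₁x₄ + x₃x₂ - x₁x₂ - x₃x₄`.
-/

lemma Nat.add_choose_two (m n : ℕ) : (m + n).choose 2 = m.choose 2 + n.choose 2 + m * n := by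
  induction n with
  | zero => simp
  | succ n ih =>
    rw [← add_assoc, Nat.choose_succ_succ, Nat.choose_succ_succ n, ih, Nat.choose_one_right,
      Nat.choose_one_right]
    ring

namespace Finset

variable {α M : Type*} [LinearOrder α] [AddCommMonoid M]

def pairSum (s : Finset α) (f : α → α → M) : M :=
  ∑ i ∈ s, ∑ j ∈ s, if i < j then f i j else 0

lemma pairSum_add (s : Finset α) (f g : α → α → M) :
    pairSum s (fun i j => f i j + g i j) = pairSum s f + pairSum s g := by
  simp only [pairSum, ← sum_add_distrib, ite_add_ite, add_zero]

lemma pairSum_ite_mem {s t : Finset α} (h : t ⊆ s) (f : α → α → M) :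
    pairSum s (fun i j => if i ∈ t ∧ j ∈ t then f i j else 0) = pairSum t f := by
  have hsummand : ∀ i j, (if i < j then (if i ∈ t ∧ j ∈ t then f i j else 0) else 0) =
      if i ∈ t then (if j ∈ t then (if i < j then f i j else 0) else 0) else 0 := by
    intro i j; split_ifs <;> simp_all
  simp only [pairSum, hsummand, sum_ite_irrel, sum_const_zero, sum_ite_mem, inter_eq_right.2 h]

lemma pairSum_insert_of_forall_lt {s : Finset α} {m : α} (hm : ∀ i ∈ s, i < m)
    (f : α → α → M) : pairSum (insert m s) f = pairSum s f + ∑ i ∈ s, f i m := by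
  have hms : m ∉ s := fun h => lt_irrefl m (hm m h)
  have hlt : ∀ i ∈ s, (if i < m then f i m else 0) = f i m := fun i hi => if_pos (hm i hi)
  have hgt : ∀ j ∈ s, (if m < j then f m j else 0) = 0 :=
    fun j hj => if_neg (lt_asymm (hm j hj))
  simp only [pairSum, sum_insert hms, lt_irrefl, if_false, sum_add_distrib, sum_congr rfl hlt,
    sum_congr rfl hgt, sum_const_zero, zero_add]
  exact add_comm _ _

lemma pairSum_one (s : Finset α) : pairSum s (fun _ _ => (1 : ℕ)) = (#s).choose 2 := by
  induction s using Finset.induction_on_max with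
  | empty => rfl
  | insert m s hm ih =>
    have hms : m ∉ s := fun h => lt_irrefl m (hm m h)
    rw [pairSum_insert_of_forall_lt hm, ih, card_insert_of_notMem hms, Nat.choose_succ_succ,
      Nat.choose_one_right, sum_const, smul_eq_mul, mul_one, add_comm]

end Finset

namespace PTree

lemma leaves_node_pair (a b : PTree) : (node [a, b]).leaves = a.leaves ++ b.leaves := by
  simp [leaves]

lemma cophen_node_pair (a b : PTree) (i j : ℕ) :
    cophen (node [a, b]) i j =
      (if i ∈ a.leaves ∧ j ∈ a.leaves then 1 + cophen a i j else 0) +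
      (if i ∈ b.leaves ∧ j ∈ b.leaves then 1 + cophen b i j else 0) := by
  simp [cophen]

open Finset

lemma Phi_node_pair (a b : PTree) :
    Phi (node [a, b]) = Phi a + Phi b + (#a.leaves.toFinset).choose 2 +
      (#b.leaves.toFinset).choose 2 := by
  have hS : (node [a, b]).leaves.toFinset = a.leaves.toFinset ∪ b.leaves.toFinset := by
    rw [leaves_node_pair, List.toFinset_append]
  have hcophen : cophen (node [a, b]) = fun i j =>
      (if i ∈ a.leaves.toFinset ∧ j ∈ a.leaves.toFinset then 1 + cophen a i j else 0) +
      (if i ∈ b.leaves.toFinset ∧ j ∈ b.leaves.toFinset then 1 + cophen b i j else 0) := by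
    ext i j; simp only [cophen_node_pair, List.mem_toFinset]
  change pairSum _ _ = pairSum _ _ + pairSum _ _ + _ + _
  rw [hcophen, hS, pairSum_add, pairSum_ite_mem subset_union_left,
    pairSum_ite_mem subset_union_right, pairSum_add, pairSum_add, pairSum_one, pairSum_one]
  ring

lemma Phi_node_pair_of_nodup {a b : PTree} (h : (node [a, b]).leaves.Nodup) :
    Phi (node [a, b]) = Phi a + Phi b + a.leaves.length.choose 2 + b.leaves.length.choose 2 := by
  rw [leaves_node_pair, List.nodup_append] at h
  rw [Phi_node_pair, List.toFinset_card_of_nodup h.1, List.toFinset_card_of_nodup h.2.1]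

lemma Phi_node_pair_node_pair_of_nodup {t₁ t₂ t₃ t₄ : PTree}
    (h : (node [node [t₁, t₂], node [t₃, t₄]]).leaves.Nodup) :
    Phi (node [node [t₁, t₂], node [t₃, t₄]]) =
      Phi t₁ + Phi t₂ + Phi t₃ + Phi t₄ +
      (t₁.leaves.length.choose 2 + t₂.leaves.length.choose 2 +
        t₃.leaves.length.choose 2 + t₄.leaves.length.choose 2) +
      (t₁.leaves.length + t₂.leaves.length).choose 2 +
      (t₃.leaves.length + t₄.leaves.length).choose 2 := by
  have hchildren := h
  rw [leaves_node_pair, List.nodup_append] at hchildren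
  rw [Phi_node_pair_of_nodup h, Phi_node_pair_of_nodup hchildren.1,
    Phi_node_pair_of_nodup hchildren.2.1, leaves_node_pair, leaves_node_pair,
    List.length_append, List.length_append]
  ring

end PTree

theorem phi_cousin_interchange (T₁ T₂ T₃ T₄ : PTree)
    (hnd : (PTree.node [PTree.node [T₁, T₂], PTree.node [T₃, T₄]]).leaves.Nodup) :
    (PTree.Phi (PTree.node [PTree.node [T₁, T₄], PTree.node [T₃, T₂]]) : ℤ) -
        PTree.Phi (PTree.node [PTree.node [T₁, T₂], PTree.node [T₃, T₄]]) =
      ((T₁.leaves.length : ℤ) - T₃.leaves.length) *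
        ((T₄.leaves.length : ℤ) - T₂.leaves.length) ∧
    (T₃.leaves.length < T₁.leaves.length → T₄.leaves.length < T₂.leaves.length →
      PTree.Phi (PTree.node [PTree.node [T₁, T₄], PTree.node [T₃, T₂]]) <
        PTree.Phi (PTree.node [PTree.node [T₁, T₂], PTree.node [T₃, T₄]])) := by
  have hnd' : (PTree.node [PTree.node [T₁, T₄], PTree.node [T₃, T₂]]).leaves.Nodup := by
    refine hnd.perm (List.perm_iff_count.2 fun x => ?_)
    simp only [PTree.leaves_node_pair, List.count_append]
    omega
  rw [PTree.Phi_node_pair_node_pair_of_nodup hnd, PTree.Phi_node_pair_node_pair_of_nodup hnd']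
  simp only [Nat.add_choose_two]
  constructor
  · push_cast
    ring
  · intro h₁₃ h₄₂
    nlinarith
end

section
/- Define f(1) = f(2) = 0 and f(n) = f(⌈n/2⌉) + f(⌊n/2⌋) + binom(⌈n/2⌉,2) + binom(⌊n/2⌋,2) for n ≥ 3, and let a(m) be the exponent of 2 in m! (the highest power of 2 dividing m!). Then for every n ≥ 1, f(n) = Σ_{k=0}^{n−1} a(k). -/
/-! Legendre's formula gives `a(k) = ⌊k/2⌋ + a(⌊k/2⌋)`, and summing over `k < n` splits both terms
according to the parity of `k`: `Σ_{k<n} ⌊k/2⌋ = C(⌈n/2⌉,2) + C(⌊n/2⌋,2)`, while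
`Σ_{k<n} a(⌊k/2⌋)` is the same partial sum of `a` taken up to `⌈n/2⌉` and up to `⌊n/2⌋`.
So `n ↦ Σ_{k<n} a(k)` satisfies the recursion defining `f`, with the same initial values. -/

open Finset Nat

theorem padicValNat_factorial_eq_div_add (p : ℕ) [hp : Fact p.Prime] (k : ℕ) :
    padicValNat p k ! = k / p + padicValNat p (k / p)! := by
  have hk : p * (k / p) + k % p = k := Nat.div_add_mod k p
  rw [← hk, padicValNat_factorial_mul_add _ (Nat.mod_lt k hp.out.pos), padicValNat_factorial_mul,
    hk, add_comm]

theorem Finset.sum_range_comp_div_two {M : Type*} [AddCommMonoid M] (h : ℕ → M) (n : ℕ) :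
    ∑ k ∈ range n, h (k / 2) = ∑ j ∈ range ((n + 1) / 2), h j + ∑ j ∈ range (n / 2), h j := by
  induction n with
  | zero => simp
  | succ n ih =>
    rw [sum_range_succ, ih, show (n + 1 + 1) / 2 = n / 2 + 1 by omega, sum_range_succ]
    abel

theorem Finset.sum_range_id_eq_choose_two (n : ℕ) : ∑ i ∈ range n, i = n.choose 2 := by
  rw [sum_range_id, choose_two_right]

theorem sum_range_padicValNat_two_factorial (n : ℕ) :
    ∑ k ∈ range n, padicValNat 2 k ! =
      ∑ k ∈ range ((n + 1) / 2), padicValNat 2 k ! + ∑ k ∈ range (n / 2), padicValNat 2 k ! +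
        ((n + 1) / 2).choose 2 + (n / 2).choose 2 := by
  rw [sum_congr rfl fun k _ => padicValNat_factorial_eq_div_add 2 k, sum_add_distrib,
    sum_range_comp_div_two (fun j => j), sum_range_comp_div_two fun j => padicValNat 2 j !,
    sum_range_id_eq_choose_two, sum_range_id_eq_choose_two]
  ring

theorem eq_of_halving_recurrence {M : Type*} [Add M] (f g c : ℕ → M)
    (h1 : f 1 = g 1) (h2 : f 2 = g 2)
    (hf : ∀ n, 3 ≤ n → f n = f ((n + 1) / 2) + f (n / 2) + c n)
    (hg : ∀ n, 3 ≤ n → g n = g ((n + 1) / 2) + g (n / 2) + c n) :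
    ∀ n, 1 ≤ n → f n = g n := by
  intro n hn
  induction n using Nat.strong_induction_on with
  | _ n ih =>
    match n, hn with
    | 1, _ => exact h1
    | 2, _ => exact h2
    | m + 3, _ =>
      rw [hf _ (by omega), hg _ (by omega), ih ((m + 3 + 1) / 2) (by omega) (by omega),
        ih ((m + 3) / 2) (by omega) (by omega)]

theorem min_phi_eq_sum_two_adic_valuations (f : ℕ → ℕ)
    (h1 : f 1 = 0) (h2 : f 2 = 0)
    (hrec : ∀ n, 3 ≤ n →
      f n = f ((n + 1) / 2) + f (n / 2) +
        Nat.choose ((n + 1) / 2) 2 + Nat.choose (n / 2) 2) :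
    ∀ n, 1 ≤ n → f n = ∑ k ∈ Finset.range n, padicValNat 2 (Nat.factorial k) := by
  refine eq_of_halving_recurrence f _ (fun n => ((n + 1) / 2).choose 2 + (n / 2).choose 2)
    ?_ ?_ (fun n hn => by rw [hrec n hn, add_assoc]) (fun n _ => ?_)
  · simp [h1]
  · simp [h2, sum_range_succ]
  · rw [sum_range_padicValNat_two_factorial, add_assoc]
end

section
/- For every n ≥ 3, the sum of the Sackin indices over all binary phylogenetic trees with n labeled leaves equals n·Σ_{k=1}^{n−1} (2n−k−3)!·k² / ((n−k−1)!·2^{n−k−1}). -/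
/-!
Every canonical binary tree with leaves `1, …, n + 1` arises in exactly one way by grafting the
leaf `n + 1` onto one of the `2n - 1` edges of a canonical binary tree with leaves `1, …, n`, the
edge above the root included; pruning that leaf undoes the graft. Grafting above a node at depth
`d` with `ℓ` descendant leaves raises the Sackin index by `ℓ + d + 1`, so the grafts of a tree `t`
have total Sackin index `(2n + 2) S(t) + n + 1`. Hence the total `Sₙ` over all trees with `n`
leaves satisfies `Sₙ₊₁ = (2n + 2) Sₙ + (n + 1) (2n - 3)!!`, and the closed form satisfies the same
recurrence, which reduces to a telescoping sum.
-/

theorem List.range'_one_succ_perm (n : ℕ) :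
    (List.range' 1 (n + 1)).Perm ((n + 1) :: List.range' 1 n) := by
  rw [List.range'_concat, one_mul, add_comm]
  exact List.perm_append_singleton _ _

theorem List.perm_range'_one_iff {l : List ℕ} {n : ℕ} :
    l.Perm (List.range' 1 n) ↔ l.Nodup ∧ l.toFinset = Finset.Icc 1 n := by
  constructor
  · intro h
    refine ⟨h.nodup_iff.mpr List.nodup_range', Finset.ext fun a => ?_⟩
    simp only [List.mem_toFinset, h.mem_iff, List.mem_range'_1, Finset.mem_Icc]
    omega
  · rintro ⟨hnd, hfin⟩
    refine (List.perm_ext_iff_of_nodup hnd List.nodup_range').mpr fun a => ?_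
    rw [← List.mem_toFinset, hfin, Finset.mem_Icc, List.mem_range'_1]
    omega

namespace PTree

variable {n x : ℕ} {t T : PTree}

@[simp] theorem leaves_leaf (i : ℕ) : leaves (.leaf i) = [i] := by rw [leaves]

@[simp] theorem leaves_pair (a b : PTree) : leaves (.node [a, b]) = leaves a ++ leaves b := by
  rw [leaves]; simp

theorem leafDepth_pair (a b : PTree) (i : ℕ) :
    leafDepth (.node [a, b]) i =
      (if i ∈ leaves a then 1 + leafDepth a i else 0) +
        (if i ∈ leaves b then 1 + leafDepth b i else 0) := by
  rw [leafDepth]; simp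

@[simp] theorem isBinary_leaf (i : ℕ) : IsBinary (.leaf i) := by rw [IsBinary]; trivial

@[simp] theorem isBinary_pair {a b : PTree} : IsBinary (.node [a, b]) ↔ IsBinary a ∧ IsBinary b := by
  rw [IsBinary]; simp

@[simp] theorem canonical_leaf (i : ℕ) : Canonical (.leaf i) := by rw [Canonical]; trivial

theorem canonical_pair {a b : PTree} :
    Canonical (.node [a, b]) ↔ a.leaves.minimum < b.leaves.minimum ∧ Canonical a ∧ Canonical b := by
  rw [Canonical]

@[elab_as_elim]
theorem IsBinary.induction {motive : (t : PTree) → IsBinary t → Prop}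
    (leaf : ∀ i, motive (.leaf i) (isBinary_leaf i))
    (node : ∀ a b (ha : IsBinary a) (hb : IsBinary b), motive a ha → motive b hb →
      motive (.node [a, b]) (isBinary_pair.mpr ⟨ha, hb⟩)) :
    ∀ t ht, motive t ht
  | .leaf i, _ => leaf i
  | .node [a, b], h =>
    have ⟨ha, hb⟩ := isBinary_pair.mp h
    node a b ha hb (IsBinary.induction leaf node a ha) (IsBinary.induction leaf node b hb)
  | .node [], h | .node [_], h | .node (_ :: _ :: _ :: _), h => by
    rw [IsBinary] at h; simp at h

theorem proper_of_isBinary (ht : IsBinary t) : Proper t := by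
  induction t, ht using IsBinary.induction with
  | leaf i => rw [Proper]; trivial
  | node a b _ _ ha hb => rw [Proper]; simp [ha, hb]

theorem length_leaves_pos (ht : IsBinary t) : 0 < (leaves t).length := by
  induction t, ht using IsBinary.induction with
  | leaf i => simp
  | node a b _ _ ha _ => simp; omega

@[simp] theorem sackin_leaf (i : ℕ) : Sackin (.leaf i) = 0 := by simp [Sackin, leafDepth]

theorem sackin_pair {a b : PTree} (h : (leaves a ++ leaves b).Nodup) :
    Sackin (.node [a, b]) = Sackin a + Sackin b + (leaves a).length + (leaves b).length := by
  have hdisj := List.disjoint_of_nodup_append h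
  have depth_a : ∀ i ∈ (leaves a).toFinset, leafDepth (.node [a, b]) i = leafDepth a i + 1 := by
    intro i hi
    rw [List.mem_toFinset] at hi
    rw [leafDepth_pair, if_pos hi, if_neg (hdisj hi)]; omega
  have depth_b : ∀ i ∈ (leaves b).toFinset, leafDepth (.node [a, b]) i = leafDepth b i + 1 := by
    intro i hi
    rw [List.mem_toFinset] at hi
    rw [leafDepth_pair, if_neg (fun ha => hdisj ha hi), if_pos hi]; omega
  rw [Sackin, leaves_pair, List.toFinset_append,
    Finset.sum_union (List.disjoint_toFinset_iff_disjoint.mpr hdisj),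
    Finset.sum_congr rfl depth_a, Finset.sum_congr rfl depth_b,
    Finset.sum_add_distrib, Finset.sum_add_distrib, Sackin, Sackin]
  simp [List.toFinset_card_of_nodup h.of_append_left, List.toFinset_card_of_nodup h.of_append_right]
  ring

/-- The trees obtained from `t` by grafting a new leaf `x` onto one of its edges, the edge above
the root included. -/
def grafts (x : ℕ) : PTree → List PTree
  | .node [a, b] =>
      .node [.node [a, b], .leaf x] ::
        ((grafts x a).map (fun a' => .node [a', b]) ++ (grafts x b).map (fun b' => .node [a, b']))
  | t => [.node [t, .leaf x]]

@[simp] theorem grafts_leaf (x i : ℕ) : grafts x (.leaf i) = [.node [.leaf i, .leaf x]] := by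
  rw [grafts]; simp

theorem grafts_pair (x : ℕ) (a b : PTree) :
    grafts x (.node [a, b]) = .node [.node [a, b], .leaf x] ::
      ((grafts x a).map (fun a' => .node [a', b]) ++ (grafts x b).map (fun b' => .node [a, b'])) := by
  rw [grafts]

theorem mem_grafts_pair {a b : PTree} :
    T ∈ grafts x (.node [a, b]) ↔ T = .node [.node [a, b], .leaf x] ∨
      (∃ a' ∈ grafts x a, T = .node [a', b]) ∨ ∃ b' ∈ grafts x b, T = .node [a, b'] := by
  simp [grafts_pair, eq_comm]

theorem isBinary_of_mem_grafts (ht : IsBinary t) (hT : T ∈ grafts x t) : IsBinary T := by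
  induction t, ht using IsBinary.induction generalizing T with
  | leaf i => simp_all
  | node a b ha hb iha ihb =>
    rcases mem_grafts_pair.mp hT with rfl | ⟨a', ha', rfl⟩ | ⟨b', hb', rfl⟩ <;> simp_all

theorem leaves_perm_of_mem_grafts (ht : IsBinary t) (hT : T ∈ grafts x t) :
    (leaves T).Perm (x :: leaves t) := by
  induction t, ht using IsBinary.induction generalizing T with
  | leaf i =>
    simp only [grafts_leaf, List.mem_singleton] at hT
    simpa [hT] using List.Perm.swap x i []
  | node a b _ _ iha ihb =>
    rcases mem_grafts_pair.mp hT with rfl | ⟨a', ha', rfl⟩ | ⟨b', hb', rfl⟩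
    · simpa using List.perm_append_singleton x (leaves a ++ leaves b)
    · simpa using (iha ha').append_right (leaves b)
    · simpa using ((ihb hb').append_left (leaves a)).trans List.perm_middle

theorem length_leaves_of_mem_grafts (ht : IsBinary t) (hT : T ∈ grafts x t) :
    (leaves T).length = (leaves t).length + 1 :=
  (leaves_perm_of_mem_grafts ht hT).length_eq

theorem mem_leaves_of_mem_grafts (ht : IsBinary t) (hT : T ∈ grafts x t) : x ∈ leaves T :=
  (leaves_perm_of_mem_grafts ht hT).mem_iff.mpr List.mem_cons_self

theorem length_grafts (ht : IsBinary t) : (grafts x t).length = 2 * (leaves t).length - 1 := by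
  induction t, ht using IsBinary.induction with
  | leaf i => simp
  | node a b ha hb iha ihb =>
    have := length_leaves_pos ha
    have := length_leaves_pos hb
    simp [grafts_pair, iha, ihb]
    omega

theorem minimum_leaves_lt (ht : IsBinary t) (hlt : ∀ y ∈ leaves t, y < x) :
    (leaves t).minimum < x := by
  obtain ⟨y, hy⟩ := List.exists_mem_of_length_pos (length_leaves_pos ht)
  exact (List.minimum_le_of_mem' hy).trans_lt (WithTop.coe_lt_coe.mpr (hlt y hy))

theorem minimum_leaves_of_mem_grafts (ht : IsBinary t) (hT : T ∈ grafts x t) :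
    (leaves T).minimum = min (x : WithTop ℕ) (leaves t).minimum :=
  (leaves_perm_of_mem_grafts ht hT).minimum_eq.trans (List.minimum_cons x _)

theorem canonical_of_mem_grafts (ht : IsBinary t) (hc : Canonical t)
    (hlt : ∀ y ∈ leaves t, y < x) (hT : T ∈ grafts x t) : Canonical T := by
  induction t, ht using IsBinary.induction generalizing T with
  | leaf i =>
    simp only [grafts_leaf, List.mem_singleton] at hT
    simpa [hT, canonical_pair] using hlt
  | node a b ha hb iha ihb =>
    obtain ⟨hmin, hca, hcb⟩ := canonical_pair.mp hc
    simp only [leaves_pair, List.mem_append] at hlt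
    rcases mem_grafts_pair.mp hT with rfl | ⟨a', ha', rfl⟩ | ⟨b', hb', rfl⟩
    · refine canonical_pair.mpr ⟨?_, hc, canonical_leaf x⟩
      simpa using minimum_leaves_lt (isBinary_pair.mpr ⟨ha, hb⟩) (by simpa using hlt)
    · refine canonical_pair.mpr ⟨?_, iha hca (fun y hy => hlt y (.inl hy)) ha', hcb⟩
      rw [minimum_leaves_of_mem_grafts ha ha']
      exact (min_le_right _ _).trans_lt hmin
    · refine canonical_pair.mpr ⟨?_, hca, ihb hcb (fun y hy => hlt y (.inr hy)) hb'⟩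
      rw [minimum_leaves_of_mem_grafts hb hb']
      exact lt_min (minimum_leaves_lt ha fun y hy => hlt y (.inl hy)) hmin

theorem nodup_grafts (ht : IsBinary t) (hx : x ∉ leaves t) : (grafts x t).Nodup := by
  induction t, ht using IsBinary.induction with
  | leaf i => simp
  | node a b ha hb iha ihb =>
    simp only [leaves_pair, List.mem_append, not_or] at hx
    have node_inj : ∀ {u v u' v' : PTree}, PTree.node [u, v] = .node [u', v'] → u = u' ∧ v = v' := by
      intro u v u' v' h; simpa using h
    rw [grafts_pair, List.nodup_cons, List.nodup_append]
    refine ⟨?_, (iha hx.1).map fun _ _ h => (node_inj h).1,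
      (ihb hx.2).map fun _ _ h => (node_inj h).2, ?_⟩
    · simp only [List.mem_append, List.mem_map, not_or, not_exists, not_and]
      constructor
      · intro a' _ h
        exact hx.2 (by simp [(node_inj h).2])
      · intro b' hb' h
        have := length_leaves_of_mem_grafts hb hb'
        have := length_leaves_pos hb
        simp_all [(node_inj h).2]
    · simp only [List.mem_map]
      rintro _ ⟨a', ha', rfl⟩ _ ⟨b', -, rfl⟩ h
      exact hx.1 ((node_inj h).1 ▸ mem_leaves_of_mem_grafts ha ha')

def prune (x : ℕ) : PTree → PTree
  | .node [a, b] =>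
      if leaves b = [x] then a
      else if x ∈ leaves a then .node [prune x a, b] else .node [a, prune x b]
  | t => t

theorem prune_of_mem_grafts (ht : IsBinary t) (hx : x ∉ leaves t) (hT : T ∈ grafts x t) :
    prune x T = t := by
  induction t, ht using IsBinary.induction generalizing T with
  | leaf i =>
    simp only [grafts_leaf, List.mem_singleton] at hT
    simp [hT, prune]
  | node a b ha hb iha ihb =>
    simp only [leaves_pair, List.mem_append, not_or] at hx
    have hxb : leaves b ≠ [x] := fun h => hx.2 (by simp [h])
    rcases mem_grafts_pair.mp hT with rfl | ⟨a', ha', rfl⟩ | ⟨b', hb', rfl⟩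
    · simp [prune]
    · simp [prune, hxb, mem_leaves_of_mem_grafts ha ha', iha hx.1 ha']
    · have hb'x : leaves b' ≠ [x] := fun h => by
        have := length_leaves_of_mem_grafts hb hb'
        have := length_leaves_pos hb
        simp_all
      simp [prune, hb'x, hx.1, ihb hx.2 hb']

theorem sum_sackin_grafts (ht : IsBinary t) (hnd : (x :: leaves t).Nodup) :
    ((grafts x t).map Sackin).sum =
      (2 * (leaves t).length + 2) * Sackin t + (leaves t).length + 1 := by
  induction t, ht using IsBinary.induction with
  | leaf i =>
    rw [grafts_leaf, List.map_singleton, List.sum_singleton,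
      sackin_pair (by simpa [eq_comm] using hnd)]
    simp
  | node a b ha hb iha ihb =>
    have hab : IsBinary (.node [a, b]) := isBinary_pair.mpr ⟨ha, hb⟩
    have nodup_of_mem {T} (hT : T ∈ grafts x (.node [a, b])) : (leaves T).Nodup :=
      (leaves_perm_of_mem_grafts hab hT).nodup_iff.mpr hnd
    rw [leaves_pair] at hnd
    have hnda : (x :: leaves a).Nodup := hnd.sublist ((List.sublist_append_left _ _).cons_cons x)
    have hndb : (x :: leaves b).Nodup := hnd.sublist ((List.sublist_append_right _ _).cons_cons x)
    have sackin_left : ∀ a' ∈ grafts x a, Sackin (.node [a', b]) =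
        Sackin a' + (Sackin b + (leaves a).length + 1 + (leaves b).length) := by
      intro a' ha'
      rw [sackin_pair (by simpa using nodup_of_mem (mem_grafts_pair.mpr (.inr (.inl ⟨a', ha', rfl⟩)))),
        length_leaves_of_mem_grafts ha ha']
      ring
    have sackin_right : ∀ b' ∈ grafts x b, Sackin (.node [a, b']) =
        Sackin b' + (Sackin a + (leaves a).length + (leaves b).length + 1) := by
      intro b' hb'
      rw [sackin_pair (by simpa using nodup_of_mem (mem_grafts_pair.mpr (.inr (.inr ⟨b', hb', rfl⟩)))),
        length_leaves_of_mem_grafts hb hb']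
      ring
    have sackin_root : Sackin (.node [.node [a, b], .leaf x]) = _ :=
      sackin_pair (by simpa using nodup_of_mem (mem_grafts_pair.mpr (.inl rfl)))
    obtain ⟨p, hp⟩ := Nat.exists_eq_add_one.mpr (length_leaves_pos ha)
    obtain ⟨q, hq⟩ := Nat.exists_eq_add_one.mpr (length_leaves_pos hb)
    rw [grafts_pair, List.map_cons, List.sum_cons, List.map_append, List.sum_append,
      List.map_map, List.map_map, Function.comp_def, Function.comp_def,
      List.map_congr_left sackin_left, List.map_congr_left sackin_right]
    simp only [List.sum_map_add, List.map_const', List.sum_replicate, smul_eq_mul,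
      length_grafts ha, length_grafts hb, iha hnda, ihb hndb, sackin_root, sackin_pair hnd.of_cons,
      leaves_pair, leaves_leaf, sackin_leaf, List.length_append, List.length_singleton, hp, hq]
    rw [show 2 * (p + 1) - 1 = 2 * p + 1 by omega, show 2 * (q + 1) - 1 = 2 * q + 1 by omega]
    ring

theorem node_leaf_mem_grafts (x : ℕ) (t : PTree) : .node [t, .leaf x] ∈ grafts x t := by
  rw [grafts.eq_def]; split <;> simp

theorem exists_mem_grafts (hT : IsBinary T) (hc : Canonical T) (hx : x ∈ leaves T)
    (hmax : ∀ y ∈ leaves T, y ≤ x) (hleaf : T ≠ .leaf x) :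
    ∃ t, IsBinary t ∧ Canonical t ∧ T ∈ grafts x t := by
  induction T, hT using IsBinary.induction with
  | leaf i => simp_all
  | node a b ha hb iha ihb =>
    obtain ⟨hmin, hca, hcb⟩ := canonical_pair.mp hc
    simp only [leaves_pair, List.mem_append] at hx hmax
    rcases hx with hxa | hxb
    · have hax : a ≠ .leaf x := by
        rintro rfl
        obtain ⟨y, hy⟩ := List.exists_mem_of_length_pos (length_leaves_pos hb)
        have hxy : x < y := by simpa using hmin.trans_le (List.minimum_le_of_mem' hy)
        exact (hmax y (.inr hy)).not_gt hxy
      obtain ⟨a₀, ha₀, hca₀, hmem⟩ := iha hca hxa (fun y hy => hmax y (.inl hy)) hax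
      have hmin₀ : (leaves a₀).minimum ≤ x := by
        obtain ⟨y, hy⟩ := List.exists_mem_of_length_pos (length_leaves_pos ha₀)
        have hya : y ∈ leaves a := (leaves_perm_of_mem_grafts ha₀ hmem).mem_iff.mpr (.tail _ hy)
        exact (List.minimum_le_of_mem' hy).trans (WithTop.coe_le_coe.mpr (hmax y (.inl hya)))
      rw [minimum_leaves_of_mem_grafts ha₀ hmem, min_eq_right hmin₀] at hmin
      exact ⟨.node [a₀, b], isBinary_pair.mpr ⟨ha₀, hb⟩, canonical_pair.mpr ⟨hmin, hca₀, hcb⟩,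
        mem_grafts_pair.mpr (.inr (.inl ⟨a, hmem, rfl⟩))⟩
    · by_cases hbx : b = .leaf x
      · exact ⟨a, ha, hca, hbx ▸ node_leaf_mem_grafts x a⟩
      obtain ⟨b₀, hb₀, hcb₀, hmem⟩ := ihb hcb hxb (fun y hy => hmax y (.inr hy)) hbx
      rw [minimum_leaves_of_mem_grafts hb₀ hmem] at hmin
      exact ⟨.node [a, b₀], isBinary_pair.mpr ⟨ha, hb₀⟩,
        canonical_pair.mpr ⟨hmin.trans_le (min_le_right _ _), hca, hcb₀⟩,
        mem_grafts_pair.mpr (.inr (.inr ⟨b, hmem, rfl⟩))⟩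

def binaryTrees : ℕ → List PTree
  | 0 => []
  | 1 => [.leaf 1]
  | n + 2 => (binaryTrees (n + 1)).flatMap (grafts (n + 2))

theorem mem_binaryTrees :
    T ∈ binaryTrees n ↔ IsBinary T ∧ Canonical T ∧ (leaves T).Perm (List.range' 1 n) := by
  induction n using binaryTrees.induct generalizing T with
  | case1 =>
    simp only [binaryTrees, List.not_mem_nil, List.range'_zero, List.perm_nil, false_iff, not_and]
    exact fun hT _ h => (length_leaves_pos hT).ne' (by simp [h])
  | case2 =>
    simp only [binaryTrees, List.mem_singleton, List.range'_one, List.perm_singleton]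
    refine ⟨by rintro rfl; simp, fun ⟨hT, _, h⟩ => ?_⟩
    induction T, hT using IsBinary.induction with
    | leaf i => simpa using h
    | node a b ha hb _ _ =>
      have hlen := congrArg List.length h
      have := length_leaves_pos ha
      have := length_leaves_pos hb
      simp only [leaves_pair, List.length_append, List.length_singleton] at hlen
      omega
  | case3 n ih =>
    have range_perm := List.range'_one_succ_perm (n + 1)
    rw [binaryTrees, List.mem_flatMap]
    constructor
    · rintro ⟨t, ht, hT⟩
      obtain ⟨htb, htc, htp⟩ := ih.mp ht
      have hlt : ∀ y ∈ leaves t, y < n + 2 := fun y hy => by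
        have := List.mem_range'_1.mp (htp.mem_iff.mp hy); omega
      exact ⟨isBinary_of_mem_grafts htb hT, canonical_of_mem_grafts htb htc hlt hT,
        (leaves_perm_of_mem_grafts htb hT).trans ((htp.cons _).trans range_perm.symm)⟩
    · rintro ⟨hT, hc, hp⟩
      have hx : n + 2 ∈ leaves T := hp.mem_iff.mpr (List.mem_range'_1.mpr (by omega))
      have hmax : ∀ y ∈ leaves T, y ≤ n + 2 := fun y hy => by
        have := List.mem_range'_1.mp (hp.mem_iff.mp hy); omega
      have hleaf : T ≠ .leaf (n + 2) := by rintro rfl; simpa using hp.length_eq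
      obtain ⟨t, ht, htc, hmem⟩ := exists_mem_grafts hT hc hx hmax hleaf
      have htp := ((leaves_perm_of_mem_grafts ht hmem).symm.trans (hp.trans range_perm)).cons_inv
      exact ⟨t, ih.mpr ⟨ht, htc, htp⟩, hmem⟩

theorem setOf_isPhylo_isBinary_canonical :
    {T | IsPhylo n T ∧ IsBinary T ∧ Canonical T} = {T | T ∈ binaryTrees n} := by
  ext T
  rw [Set.mem_ofPred_eq, Set.mem_ofPred_eq, mem_binaryTrees, List.perm_range'_one_iff, IsPhylo]
  exact ⟨fun ⟨⟨_, h⟩, hb, hc⟩ => ⟨hb, hc, h⟩, fun ⟨hb, hc, h⟩ => ⟨⟨proper_of_isBinary hb, h⟩, hb, hc⟩⟩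

theorem length_leaves_of_mem_binaryTrees (ht : t ∈ binaryTrees n) : (leaves t).length = n := by
  simpa using (mem_binaryTrees.mp ht).2.2.length_eq

theorem nodup_cons_leaves_of_mem_binaryTrees (ht : t ∈ binaryTrees (n + 1)) :
    ((n + 2) :: leaves t).Nodup :=
  (((mem_binaryTrees.mp ht).2.2.cons _).trans (List.range'_one_succ_perm (n + 1)).symm).nodup_iff.mpr
    List.nodup_range'

theorem nodup_binaryTrees (n : ℕ) : (binaryTrees n).Nodup := by
  induction n using binaryTrees.induct with
  | case1 => simp [binaryTrees]
  | case2 => simp [binaryTrees]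
  | case3 n ih =>
    have hx {t} (ht : t ∈ binaryTrees (n + 1)) : n + 2 ∉ leaves t :=
      (List.nodup_cons.mp (nodup_cons_leaves_of_mem_binaryTrees ht)).1
    have hb {t} (ht : t ∈ binaryTrees (n + 1)) : IsBinary t := (mem_binaryTrees.mp ht).1
    rw [binaryTrees, List.nodup_flatMap]
    refine ⟨fun t ht => nodup_grafts (hb ht) (hx ht),
      ih.pairwise_of_forall_ne fun t₁ h₁ t₂ h₂ hne T hT₁ hT₂ => hne ?_⟩
    rw [← prune_of_mem_grafts (hb h₁) (hx h₁) hT₁, prune_of_mem_grafts (hb h₂) (hx h₂) hT₂]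

theorem length_binaryTrees_succ (n : ℕ) :
    (binaryTrees (n + 2)).length = (2 * n + 1) * (binaryTrees (n + 1)).length := by
  have hgrafts : ∀ t ∈ binaryTrees (n + 1), (grafts (n + 2) t).length = 2 * n + 1 := by
    intro t ht
    rw [length_grafts (mem_binaryTrees.mp ht).1, length_leaves_of_mem_binaryTrees ht]
    omega
  rw [binaryTrees, List.length_flatMap, List.map_congr_left hgrafts, List.map_const',
    List.sum_replicate, smul_eq_mul, mul_comm]

theorem sum_sackin_binaryTrees_succ (n : ℕ) :
    ((binaryTrees (n + 2)).map Sackin).sum =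
      (2 * n + 4) * ((binaryTrees (n + 1)).map Sackin).sum + (n + 2) * (binaryTrees (n + 1)).length := by
  have hgrafts : ∀ t ∈ binaryTrees (n + 1),
      ((grafts (n + 2) t).map Sackin).sum = (2 * n + 4) * Sackin t + (n + 2) := by
    intro t ht
    rw [sum_sackin_grafts (mem_binaryTrees.mp ht).1 (nodup_cons_leaves_of_mem_binaryTrees ht),
      length_leaves_of_mem_binaryTrees ht]
    ring
  simp only [binaryTrees, List.flatMap_def, List.map_flatten, List.sum_flatten, List.map_map,
    Function.comp_def]
  rw [List.map_congr_left hgrafts, List.sum_map_add, List.sum_map_mul_left, List.map_const',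
    List.sum_replicate, smul_eq_mul, mul_comm (n + 2)]

open Nat Finset

theorem length_binaryTrees (m : ℕ) :
    ((binaryTrees (m + 1)).length : ℝ) = (2 * m)! / (2 ^ m * m !) := by
  induction m with
  | zero => simp [binaryTrees]
  | succ m ih =>
    rw [length_binaryTrees_succ, cast_mul, ih, show 2 * (m + 1) = 2 * m + 1 + 1 by ring,
      factorial_succ, factorial_succ, factorial_succ]
    push_cast
    field_simp
    ring

/-- In the notation of the paper, `∑ k, k * N (m + 1) k` written with `i = m - k`, where `N n k`
counts the binary trees with `n` leaves in which a fixed leaf has depth `k`. -/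
noncomputable def leafDepthTotal (m : ℕ) : ℝ :=
  ∑ i ∈ range m, ((m - 1 + i)! : ℝ) / (i ! * 2 ^ i) * ((m - i : ℕ) : ℝ) ^ 2

theorem leafDepthTotal_succ (m : ℕ) :
    leafDepthTotal (m + 1) = 2 * (m + 1) * leafDepthTotal m + (2 * m)! / (2 ^ m * m !) := by
  -- Gosper's certificate: the summand of `leafDepthTotal (m + 1) - 2 (m + 1) leafDepthTotal m`
  -- telescopes as `g (i + 1) - g i`.
  set g : ℕ → ℝ := fun i => ((m - 1 + i)! : ℝ) / (i ! * 2 ^ i) * (-2 * i * (i - m) * (i - m - 2))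
  have step : ∀ i ∈ range m,
      ((m + 1 - 1 + i)! : ℝ) / (i ! * 2 ^ i) * ((m + 1 - i : ℕ) : ℝ) ^ 2 -
        2 * (m + 1) * (((m - 1 + i)! : ℝ) / (i ! * 2 ^ i) * ((m - i : ℕ) : ℝ) ^ 2) =
      g (i + 1) - g i := by
    intro i hi
    obtain ⟨k, rfl⟩ : ∃ k, m = i + k + 1 := ⟨m - i - 1, by have := mem_range.mp hi; omega⟩
    simp only [g, show i + k + 1 + 1 - 1 + i = 2 * i + k + 1 by omega,
      show i + k + 1 - 1 + (i + 1) = 2 * i + k + 1 by omega, show i + k + 1 - 1 + i = 2 * i + k by omega,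
      show i + k + 1 + 1 - i = k + 2 by omega, show i + k + 1 - i = k + 1 by omega,
      factorial_succ, pow_succ]
    push_cast
    field_simp
    ring
  have telescope := sum_range_sub g m
  rw [← sum_congr rfl step, sum_sub_distrib, ← mul_sum] at telescope
  simp only [g, sub_self, mul_zero, zero_mul, CharP.cast_eq_zero, zero_sub, Nat.add_sub_cancel] at telescope
  rw [leafDepthTotal, sum_range_succ, show m + 1 - 1 + m = 2 * m by omega, show m + 1 - m = 1 by omega,
    leafDepthTotal]
  push_cast
  linear_combination telescope

theorem sum_sackin_binaryTrees (m : ℕ) :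
    ((binaryTrees (m + 1)).map fun T => (Sackin T : ℝ)).sum = (m + 1) * leafDepthTotal m := by
  rw [show (fun T => (Sackin T : ℝ)) = Nat.cast ∘ Sackin from rfl, ← List.map_map, ← cast_list_sum]
  induction m with
  | zero => simp [binaryTrees, leafDepthTotal]
  | succ m ih =>
    rw [sum_sackin_binaryTrees_succ, cast_add, cast_mul, cast_mul, ih, length_binaryTrees,
      leafDepthTotal_succ]
    push_cast
    ring

theorem leafDepthTotal_eq_sum_Icc (m : ℕ) :
    leafDepthTotal m = ∑ k ∈ Icc 1 m,
      ((2 * (m + 1) - k - 3)! : ℝ) * (k : ℝ) ^ 2 / ((m + 1 - k - 1)! * 2 ^ (m + 1 - k - 1)) := by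
  refine sum_nbij' (fun i => m - i) (fun k => m - k) ?_ ?_ ?_ ?_ fun i hi => ?_
  · intro i hi; rw [mem_range] at hi; rw [mem_Icc]; omega
  · intro k hk; rw [mem_Icc] at hk; rw [mem_range]; omega
  · intro i hi; rw [mem_range] at hi; omega
  · intro k hk; rw [mem_Icc] at hk; omega
  · rw [mem_range] at hi
    rw [show 2 * (m + 1) - (m - i) - 3 = m - 1 + i by omega, show m + 1 - (m - i) - 1 = i by omega]
    ring

end PTree

theorem sum_sackin_over_binary_trees_general (n : ℕ) :
    ∑ᶠ T ∈ {T : PTree | PTree.IsPhylo n T ∧ PTree.IsBinary T ∧ PTree.Canonical T},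
        (PTree.Sackin T : ℝ) =
      (n : ℝ) * ∑ k ∈ Finset.Icc 1 (n - 1),
        ((2 * n - k - 3).factorial : ℝ) * (k : ℝ) ^ 2 /
          (((n - k - 1).factorial : ℝ) * 2 ^ (n - k - 1)) := by
  classical
  rw [PTree.setOf_isPhylo_isBinary_canonical, ← List.coe_toFinset, finsum_mem_coe_finset,
    List.sum_toFinset _ (PTree.nodup_binaryTrees n)]
  cases n with
  | zero => simp [PTree.binaryTrees]
  | succ m =>
    rw [PTree.sum_sackin_binaryTrees, PTree.leafDepthTotal_eq_sum_Icc, Nat.add_sub_cancel,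
      Nat.cast_succ]

theorem sum_sackin_over_binary_trees (n : ℕ) (hn : 3 ≤ n) :
    ∑ᶠ T ∈ {T : PTree | PTree.IsPhylo n T ∧ PTree.IsBinary T ∧ PTree.Canonical T},
        (PTree.Sackin T : ℝ) =
      (n : ℝ) * ∑ k ∈ Finset.Icc 1 (n - 1),
        ((2 * n - k - 3).factorial : ℝ) * (k : ℝ) ^ 2 /
          (((n - k - 1).factorial : ℝ) * 2 ^ (n - k - 1)) :=
  sum_sackin_over_binary_trees_general n
end
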